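/- arXiv:1803.04721 — 2 statements merged into one kernel-verified Lean document; each statement's English description precedes it below -/
import Mathlib

section
/- Let s ≥ 2 and let t = R(3,s) − 1 where R(3,s) is the Ramsey number. Suppose φ: E(K_t) → {1,2} is a 2-edge-colouring of the complete graph K_t with no triangle in colour 1 and no K_s in colour 2. Let G be obtained from the complete t-partite Turán graph T_t(n) by placing inside each part a triangle-free graph H with independence number at most f(n), where edges inside parts get colour 2 and edges between parts X_i and X_j get colour φ(ij). Then G₁ (colour-1 subgraph) is triangle-free and G₂ (colour-2 subgraph) is K_{2s−1}-free, and α(G) ≤ t·f(n). -/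
open Finset

lemma clique_card_lt {V : Type*} {G : SimpleGraph V} {n : ℕ} (h : G.CliqueFree n)
    {B : Finset V} (hB : G.IsClique B) : B.card < n := by
  by_contra hc
  push_neg at hc
  obtain ⟨C, hCB, hCcard⟩ := Finset.exists_subset_card_eq hc
  exact h C ⟨hB.subset hCB, hCcard⟩

/-- Every symmetric 2-colouring of the edges of `K_N` yields a colour-0 triangle or a
colour-1 clique of size `s`. -/
def RamseyProp (N s : ℕ) : Prop :=
  ∀ φ : Fin N → Fin N → Fin 2, (∀ i j, φ i j = φ j i) →
    (∃ A : Finset (Fin N), A.card = 3 ∧ ∀ i ∈ A, ∀ j ∈ A, i ≠ j → φ i j = 0) ∨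
    (∃ A : Finset (Fin N), A.card = s ∧ ∀ i ∈ A, ∀ j ∈ A, i ≠ j → φ i j = 1)

/-- The Ramsey number `R(3,s)`. -/
noncomputable def ramseyThree (s : ℕ) : ℕ := sInf {N | RamseyProp N s}

/-- the lower-bound construction for `rt(n, K₃, K_{2s−1}, g_s(n))`. -/
theorem stmt_9 (s t k f : ℕ) (hs : 2 ≤ s) (ht : t + 1 = ramseyThree s)
    (φ : Fin t → Fin t → Fin 2) (hφsym : ∀ i j, φ i j = φ j i)
    -- `φ` is a `(K₃, K_s)`-free colouring of `K_t`:
    (hφ1 : (SimpleGraph.fromRel (fun i j : Fin t => φ i j = 0)).CliqueFree 3)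
    (hφ2 : (SimpleGraph.fromRel (fun i j : Fin t => φ i j = 1)).CliqueFree s)
    -- `H` is a triangle-free graph with independence number at most `f`, placed in each part:
    (H : SimpleGraph (Fin k)) (hH3 : H.CliqueFree 3)
    (hHα : ∀ S : Finset (Fin k), (∀ a ∈ S, ∀ b ∈ S, ¬ H.Adj a b) → S.card ≤ f) :
    -- `G` is the Turán graph `T_t(tk)` together with a copy of `H` inside each part,
    -- `G₁` its colour-1 edges (crossing pairs with `φ = 0`),
    -- `G₂` its colour-2 edges (edges inside parts, and crossing pairs with `φ = 1`):
    ∀ G G₁ G₂ : SimpleGraph (Fin t × Fin k),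
      G = SimpleGraph.fromRel
        (fun p q => if p.1 = q.1 then H.Adj p.2 q.2 else True) →
      G₁ = SimpleGraph.fromRel
        (fun p q => p.1 ≠ q.1 ∧ φ p.1 q.1 = 0) →
      G₂ = SimpleGraph.fromRel
        (fun p q => (p.1 = q.1 ∧ H.Adj p.2 q.2) ∨ (p.1 ≠ q.1 ∧ φ p.1 q.1 = 1)) →
      G₁.CliqueFree 3 ∧ G₂.CliqueFree (2 * s - 1) ∧
        ∀ S : Finset (Fin t × Fin k), (∀ a ∈ S, ∀ b ∈ S, ¬ G.Adj a b) → S.card ≤ t * f := by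
  intro G G₁ G₂ hG hG₁ hG₂
  subst hG hG₁ hG₂
  refine ⟨?_, ?_, ?_⟩
  · -- G₁ triangle-free
    intro A hA
    -- adjacency implies distinct fst and φ = 0
    have hadj : ∀ a ∈ A, ∀ b ∈ A, a ≠ b → a.1 ≠ b.1 ∧ φ a.1 b.1 = 0 := by
      intro a ha b hb hab
      have := hA.1 ha hb hab
      simp only [SimpleGraph.fromRel_adj] at this
      rcases this.2 with ⟨h1, h2⟩ | ⟨h1, h2⟩
      · exact ⟨h1, h2⟩
      · exact ⟨h1.symm, (hφsym a.1 b.1).trans h2⟩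
    have hinj : Set.InjOn Prod.fst (A : Set (Fin t × Fin k)) := by
      intro a ha b hb hfst
      by_contra hne
      exact (hadj a ha b hb hne).1 hfst
    refine hφ1 (A.image Prod.fst) ⟨?_, ?_⟩
    · intro i hi j hj hij
      simp only [mem_coe, mem_image] at hi hj
      obtain ⟨a, ha, rfl⟩ := hi
      obtain ⟨b, hb, rfl⟩ := hj
      have hab : a ≠ b := fun h => hij (by rw [h])
      simp only [SimpleGraph.fromRel_adj]
      exact ⟨hij, Or.inl (hadj a ha b hb hab).2⟩
    · rw [Finset.card_image_of_injOn hinj, hA.2]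
  · -- G₂ is K_{2s-1}-free
    intro A hA
    have hadj : ∀ a ∈ A, ∀ b ∈ A, a ≠ b →
        (a.1 = b.1 ∧ H.Adj a.2 b.2) ∨ (a.1 ≠ b.1 ∧ φ a.1 b.1 = 1) := by
      intro a ha b hb hab
      have := hA.1 ha hb hab
      simp only [SimpleGraph.fromRel_adj] at this
      rcases this.2 with (⟨h1, h2⟩ | ⟨h1, h2⟩) | (⟨h1, h2⟩ | ⟨h1, h2⟩)
      · exact Or.inl ⟨h1, h2⟩
      · exact Or.inr ⟨h1, h2⟩
      · exact Or.inl ⟨h1.symm, h2.symm⟩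
      · exact Or.inr ⟨h1.symm, (hφsym a.1 b.1).trans h2⟩
    set B := A.image Prod.fst with hB
    -- fibers have size ≤ 2
    have hfib : ∀ i ∈ B, (A.filter fun x => x.1 = i).card ≤ 2 := by
      intro i _
      by_contra hc
      push_neg at hc
      obtain ⟨C, hCsub, hCcard⟩ := Finset.exists_subset_card_eq hc
      -- C has 3 elements, all with fst = i, pairwise adjacent → triangle in H
      have hmem : ∀ x ∈ C, x ∈ A ∧ x.1 = i := by
        intro x hx
        have := hCsub hx
        simp only [mem_filter] at this
        exact this
      have hinj2 : Set.InjOn Prod.snd (C : Set (Fin t × Fin k)) := by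
        intro a ha b hb hsnd
        have h1 := hmem a ha
        have h2 := hmem b hb
        exact Prod.ext (h1.2.trans h2.2.symm) hsnd
      refine hH3 (C.image Prod.snd) ⟨?_, ?_⟩
      · intro x hx y hy hxy
        simp only [mem_coe, mem_image] at hx hy
        obtain ⟨a, ha, rfl⟩ := hx
        obtain ⟨b, hb, rfl⟩ := hy
        have hab : a ≠ b := fun h => hxy (by rw [h])
        have h1 := hmem a ha
        have h2 := hmem b hb
        rcases hadj a h1.1 b h2.1 hab with ⟨_, h⟩ | ⟨h, _⟩
        · exact h
        · exact absurd (h1.2.trans h2.2.symm) h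
      · rw [Finset.card_image_of_injOn hinj2, hCcard]
    have hAle : A.card ≤ 2 * B.card :=
      Finset.card_le_mul_card_image A 2 hfib
    -- B is a clique in colour-1 graph on Fin t
    have hBclique : (SimpleGraph.fromRel (fun i j : Fin t => φ i j = 1)).IsClique B := by
      intro i hi j hj hij
      simp only [hB, mem_coe, mem_image] at hi hj
      obtain ⟨a, ha, rfl⟩ := hi
      obtain ⟨b, hb, rfl⟩ := hj
      have hab : a ≠ b := fun h => hij (by rw [h])
      rcases hadj a ha b hb hab with ⟨h, _⟩ | ⟨_, h⟩
      · exact absurd h hij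
      · simp only [SimpleGraph.fromRel_adj]
        exact ⟨hij, Or.inl h⟩
    have hBlt : B.card < s := clique_card_lt hφ2 hBclique
    have : A.card = 2 * s - 1 := hA.2
    omega
  · -- independence number
    intro S hS
    rcases S.eq_empty_or_nonempty with rfl | ⟨x, hx⟩
    · simp
    have hsame : ∀ y ∈ S, y.1 = x.1 := by
      intro y hy
      by_contra hne
      apply hS x hx y hy
      simp only [SimpleGraph.fromRel_adj]
      refine ⟨fun h => hne (congrArg Prod.fst h.symm), Or.inr ?_⟩
      rw [if_neg hne]
      trivial
    have hinj : Set.InjOn Prod.snd (S : Set (Fin t × Fin k)) := fun a ha b hb h =>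
      Prod.ext ((hsame a ha).trans (hsame b hb).symm) h
    have hind : ∀ a ∈ S.image Prod.snd, ∀ b ∈ S.image Prod.snd, ¬ H.Adj a b := by
      intro a ha b hb
      simp only [mem_image] at ha hb
      obtain ⟨p, hp, rfl⟩ := ha
      obtain ⟨q, hq, rfl⟩ := hb
      intro hadj
      apply hS p hp q hq
      have hne : p ≠ q := fun h => H.irrefl (h ▸ hadj)
      simp only [SimpleGraph.fromRel_adj]
      refine ⟨hne, Or.inl ?_⟩
      rw [if_pos ((hsame p hp).trans (hsame q hq).symm)]
      exact hadj
    calc S.card = (S.image Prod.snd).card := (Finset.card_image_of_injOn hinj).symm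
      _ ≤ f := hHα _ hind
      _ ≤ t * f := Nat.le_mul_of_pos_left f x.1.pos
end

section
/- For every k larger than some absolute constant k₀, every graph on at least 2k²/log k vertices contains either a triangle or an independent set of size k. -/
open Finset Real

noncomputable def gg (x : ℝ) : ℝ := (Real.log (x+5) + 1/100) / (2*(x+5))
noncomputable def gg' (x : ℝ) : ℝ := (1 - Real.log (x+5) - 1/100) / (2*(x+5)^2)
noncomputable def gg'' (x : ℝ) : ℝ := (2*Real.log (x+5) + 2/100 - 3) / (2*(x+5)^3)

lemma log5_ge : (1.49:ℝ) ≤ Real.log 5 := by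
  have h2 := Real.log_two_gt_d9
  have h54 : (1/5 : ℝ) ≤ Real.log (5/4) := by
    have := Real.log_le_sub_one_of_pos (show (0:ℝ) < 4/5 by norm_num)
    have e : Real.log (4/5 : ℝ) = - Real.log (5/4) := by
      rw [show (4/5:ℝ) = (5/4)⁻¹ by norm_num, Real.log_inv]
    linarith [e ▸ this]
  have e5 : Real.log 5 = 2 * Real.log 2 + Real.log (5/4) := by
    rw [show (5:ℝ) = 2^2 * (5/4) by norm_num, Real.log_mul (by norm_num) (by norm_num),
      Real.log_pow]
    push_cast; ring
  rw [e5]; linarith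

lemma logy_ge {y : ℝ} (hy : 5 ≤ y) : (1.49:ℝ) ≤ Real.log y :=
  le_trans log5_ge (Real.log_le_log (by norm_num) hy)

lemma log10_bounds : (1.99:ℝ) ≤ Real.log 10 ∧ Real.log 10 ≤ 2.34 := by
  have h2l := Real.log_two_gt_d9
  have h2u := Real.log_two_lt_d9
  have e10 : Real.log 10 = 3 * Real.log 2 + Real.log (5/4) := by
    rw [show (10:ℝ) = 2^3 * (5/4) by norm_num, Real.log_mul (by norm_num) (by norm_num),
      Real.log_pow]
    push_cast; ring
  have h54l : (1/5 : ℝ) ≤ Real.log (5/4) := by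
    have := Real.log_le_sub_one_of_pos (show (0:ℝ) < 4/5 by norm_num)
    have e : Real.log (4/5 : ℝ) = - Real.log (5/4) := by
      rw [show (4/5:ℝ) = (5/4)⁻¹ by norm_num, Real.log_inv]
    linarith [e ▸ this]
  have h54u : Real.log (5/4 : ℝ) ≤ 1/4 := by
    have := Real.log_le_sub_one_of_pos (show (0:ℝ) < 5/4 by norm_num)
    linarith
  constructor <;> (rw [e10]; linarith)

lemma hasDerivAt_gg {x : ℝ} (hx : (-5:ℝ) < x) : HasDerivAt gg (gg' x) x := by
  have h5 : (0:ℝ) < x + 5 := by linarith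
  have h1 : HasDerivAt (fun y : ℝ => y + 5) 1 x := (hasDerivAt_id x).add_const 5
  have hlog : HasDerivAt (fun y : ℝ => Real.log (y+5)) (1/(x+5)) x := by
    simpa [one_div, Function.comp_def] using (Real.hasDerivAt_log h5.ne').comp x h1
  have hnum : HasDerivAt (fun y : ℝ => Real.log (y+5) + 1/100) (1/(x+5)) x := hlog.add_const _
  have hden : HasDerivAt (fun y : ℝ => 2*(y+5)) 2 x := by
    simpa using h1.const_mul 2
  have hden0 : 2*(x+5) ≠ 0 := by positivity
  have : HasDerivAt (fun y : ℝ => (Real.log (y+5) + 1/100) / (2*(y+5))) _ x := hnum.div hden hden0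
  convert this using 1
  · rfl
  rw [gg']
  field_simp
  ring

lemma hasDerivAt_gg' {x : ℝ} (hx : (-5:ℝ) < x) : HasDerivAt gg' (gg'' x) x := by
  have h5 : (0:ℝ) < x + 5 := by linarith
  have h1 : HasDerivAt (fun y : ℝ => y + 5) 1 x := (hasDerivAt_id x).add_const 5
  have hlog : HasDerivAt (fun y : ℝ => Real.log (y+5)) (1/(x+5)) x := by
    simpa [one_div, Function.comp_def] using (Real.hasDerivAt_log h5.ne').comp x h1
  have hnum : HasDerivAt (fun y : ℝ => 1 - Real.log (y+5) - 1/100) (-(1/(x+5))) x := by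
    simpa using ((hlog.const_sub 1).sub_const (1/100))
  have hden : HasDerivAt (fun y : ℝ => 2*(y+5)^2) (2*(2*(x+5))) x := by
    have := ((h1.pow 2).const_mul 2)
    simpa [mul_comm, mul_assoc, mul_left_comm] using this
  have hden0 : 2*(x+5)^2 ≠ 0 := by positivity
  have : HasDerivAt (fun y : ℝ => (1 - Real.log (y+5) - 1/100) / (2*(y+5)^2)) _ x := hnum.div hden hden0
  convert this using 1
  · rfl
  rw [gg'']
  field_simp
  ring

lemma gg_convex : ConvexOn ℝ (Set.Ici (0:ℝ)) gg := by
  apply convexOn_of_hasDerivWithinAt2_nonneg (convex_Ici 0) (f' := gg') (f'' := gg'')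
  · intro x hx
    exact (hasDerivAt_gg (by simp at hx; linarith)).continuousAt.continuousWithinAt
  · intro x hx
    rw [interior_Ici] at hx
    exact (hasDerivAt_gg (by simp at hx; linarith)).hasDerivWithinAt
  · intro x hx
    rw [interior_Ici] at hx
    exact (hasDerivAt_gg' (by simp at hx; linarith)).hasDerivWithinAt
  · intro x hx
    rw [interior_Ici] at hx
    have hx' : (0:ℝ) < x := hx
    have hl : (1.49:ℝ) ≤ Real.log (x+5) := logy_ge (by linarith)
    rw [gg'']
    apply div_nonneg (by linarith) (by positivity)

lemma gg'_nonpos {x : ℝ} (hx : 0 ≤ x) : gg' x ≤ 0 := by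
  have hl : (1.49:ℝ) ≤ Real.log (x+5) := logy_ge (by linarith)
  rw [gg']
  apply div_nonpos_of_nonpos_of_nonneg (by linarith) (by positivity)

lemma gg_nonneg {x : ℝ} (hx : 0 ≤ x) : 0 ≤ gg x := by
  have hl : (1.49:ℝ) ≤ Real.log (x+5) := logy_ge (by linarith)
  rw [gg]
  apply div_nonneg (by linarith) (by positivity)

lemma gg_tangent {d x : ℝ} (hd : 0 ≤ d) (hx : 0 ≤ x) :
    gg d + (x - d) * gg' d ≤ gg x := by
  rcases lt_trichotomy x d with h | h | h
  · have hs := gg_convex.slope_le_of_hasDerivAt (Set.mem_Ici.2 hx) (Set.mem_Ici.2 hd) h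
      (hasDerivAt_gg (by linarith))
    rw [slope_def_field] at hs
    have hdx : 0 < d - x := by linarith
    rw [div_le_iff₀ hdx] at hs
    nlinarith
  · subst h; simp
  · have hs := gg_convex.le_slope_of_hasDerivAt (Set.mem_Ici.2 hd) (Set.mem_Ici.2 hx) h
      (hasDerivAt_gg (by linarith))
    rw [slope_def_field] at hs
    have hdx : 0 < x - d := by linarith
    rw [le_div_iff₀ hdx] at hs
    nlinarith

lemma gg_anti {a b : ℝ} (ha : 0 ≤ a) (hab : a ≤ b) : gg b ≤ gg a := by
  have ht := gg_tangent (by linarith : (0:ℝ) ≤ b) ha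
  have h' := gg'_nonpos (by linarith : (0:ℝ) ≤ b)
  nlinarith

lemma gg_phi {d : ℝ} (hd : 0 ≤ d) : 0 ≤ 1 - (1+d) * gg d + (d - d^2) * gg' d := by
  have h5 : (0:ℝ) < d + 5 := by linarith
  have hL : Real.log (d+5) ≤ (d+5)/10 + Real.log 10 - 1 := by
    have h10 : (0:ℝ) < (d+5)/10 := by linarith
    have := Real.log_le_sub_one_of_pos h10
    have e : Real.log ((d+5)/10) = Real.log (d+5) - Real.log 10 :=
      Real.log_div (by linarith) (by norm_num)
    linarith [e ▸ this]
  obtain ⟨h10l, h10u⟩ := log10_bounds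
  have key : 0 ≤ 2*(d+5)^2 - (1+d)*(Real.log (d+5)+1/100)*(d+5) + (d-d^2)*(1-Real.log (d+5)-1/100) := by
    nlinarith [mul_nonneg (show (0:ℝ) ≤ 7*(d+5)-30 by linarith)
      (show (0:ℝ) ≤ (d+5)/10 + Real.log 10 - 1 - Real.log (d+5) by linarith), hd, sq_nonneg d]
  have expand : 1 - (1+d) * gg d + (d - d^2) * gg' d =
      (2*(d+5)^2 - (1+d)*(Real.log (d+5)+1/100)*(d+5) + (d-d^2)*(1-Real.log (d+5)-1/100)) / (2*(d+5)^2) := by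
    rw [gg, gg']
    field_simp
  rw [expand]
  exact div_nonneg key (by positivity)

lemma gfinal {k : ℕ} (hk : 1000000 ≤ k) :
    (k : ℝ) ≤ (2 * (k : ℝ)^2 / Real.log k) * gg ((k : ℝ) - 1) := by
  have hK1 : (1000000 : ℝ) ≤ (k : ℝ) := by exact_mod_cast hk
  have hKpos : (0:ℝ) < k := by linarith
  have hlk : 0 < Real.log k := Real.log_pos (by linarith)
  have hK4 : (0:ℝ) < (k:ℝ) + 4 := by linarith
  have hmono : Real.log k ≤ Real.log ((k:ℝ) + 4) := Real.log_le_log hKpos (by linarith)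
  -- 400 log k ≤ k
  have h400 : 400 * Real.log k ≤ (k : ℝ) := by
    have hs : Real.sqrt k * Real.sqrt k = (k:ℝ) := Real.mul_self_sqrt (le_of_lt hKpos)
    have hs1000 : (1000:ℝ) ≤ Real.sqrt k := by
      rw [show (1000:ℝ) = Real.sqrt 1000000 by
        rw [show (1000000:ℝ) = 1000^2 by norm_num, Real.sqrt_sq (by norm_num)]]
      exact Real.sqrt_le_sqrt hK1
    have hlog2 : Real.log k = 2 * Real.log (Real.sqrt k) := by
      rw [Real.log_sqrt (le_of_lt hKpos)]; ring
    have hls : Real.log (Real.sqrt k) ≤ Real.sqrt k - 1 :=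
      Real.log_le_sub_one_of_pos (by linarith)
    nlinarith
  have hgge : gg ((k:ℝ) - 1) = (Real.log ((k:ℝ)+4) + 1/100) / (2*((k:ℝ)+4)) := by
    rw [gg, show (k:ℝ) - 1 + 5 = (k:ℝ) + 4 by ring]
  rw [hgge, div_mul_div_comm, le_div_iff₀ (by positivity)]
  nlinarith [mul_le_mul_of_nonneg_left hmono (show (0:ℝ) ≤ 2*(k:ℝ)^2 by positivity),
    mul_le_mul_of_nonneg_left h400 (le_of_lt hKpos)]

section comb
variable {V : Type} [Fintype V] [DecidableEq V] (G : SimpleGraph V) [DecidableRel G.Adj]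

lemma double_count (X Y : Finset V) :
    ∑ u ∈ X, (Y.filter (G.Adj u)).card = ∑ w ∈ Y, (X.filter (G.Adj w)).card := by
  simp only [Finset.card_filter]
  rw [Finset.sum_comm]
  refine Finset.sum_congr rfl fun w _ => Finset.sum_congr rfl fun u _ => ?_
  exact if_congr (G.adj_comm u w) rfl rfl

lemma edge_drop (htf : ∀ a b c : V, G.Adj a b → G.Adj a c → G.Adj b c → False)
    (A : Finset V) (v : V) (hv : v ∈ A) :
    (∑ u ∈ A \ insert v (A.filter (G.Adj v)),
        ((A \ insert v (A.filter (G.Adj v))).filter (G.Adj u)).card)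
      + 2 * (∑ u ∈ A.filter (G.Adj v), (A.filter (G.Adj u)).card)
      ≤ ∑ u ∈ A, (A.filter (G.Adj u)).card := by
  set B := insert v (A.filter (G.Adj v)) with hB
  set A' := A \ B with hA'
  have hBA : B ⊆ A := by
    intro u hu
    rcases Finset.mem_insert.1 hu with h | h
    · exact h ▸ hv
    · exact (Finset.mem_filter.1 h).1
  have hvnot : v ∉ A.filter (G.Adj v) := fun h => G.irrefl (Finset.mem_filter.1 h).2
  have h1 : (∑ u ∈ A', (A.filter (G.Adj u)).card) + ∑ u ∈ B, (A.filter (G.Adj u)).card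
      = ∑ u ∈ A, (A.filter (G.Adj u)).card := Finset.sum_sdiff hBA
  have h2 : ∑ u ∈ B, (A.filter (G.Adj u)).card
      = (A.filter (G.Adj v)).card + ∑ u ∈ A.filter (G.Adj v), (A.filter (G.Adj u)).card := by
    rw [hB, Finset.sum_insert hvnot]
  have h3 : ∀ u, (A.filter (G.Adj u)).card
      = (A'.filter (G.Adj u)).card + (B.filter (G.Adj u)).card := by
    intro u
    have hA : A = A' ∪ B := (Finset.sdiff_union_of_subset hBA).symm
    rw [hA, Finset.filter_union, Finset.card_union_of_disjoint
      (Finset.disjoint_filter_filter Finset.sdiff_disjoint)]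
  have h4 : ∑ u ∈ A', (A.filter (G.Adj u)).card
      = (∑ u ∈ A', (A'.filter (G.Adj u)).card) + ∑ u ∈ A', (B.filter (G.Adj u)).card := by
    rw [← Finset.sum_add_distrib]
    exact Finset.sum_congr rfl fun u _ => h3 u
  have h5 : ∑ u ∈ A', (B.filter (G.Adj u)).card = ∑ w ∈ B, (A'.filter (G.Adj w)).card :=
    double_count G A' B
  have h5' : ∑ w ∈ B, (A'.filter (G.Adj w)).card
      = (A'.filter (G.Adj v)).card + ∑ w ∈ A.filter (G.Adj v), (A'.filter (G.Adj w)).card := by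
    rw [hB, Finset.sum_insert hvnot]
  have h5'' : (A'.filter (G.Adj v)).card = 0 := by
    rw [Finset.card_eq_zero]
    apply Finset.eq_empty_of_forall_notMem
    intro u hu
    obtain ⟨huA', hadj⟩ := Finset.mem_filter.1 hu
    obtain ⟨huA, hunB⟩ := Finset.mem_sdiff.1 huA'
    exact hunB (Finset.mem_insert_of_mem (Finset.mem_filter.2 ⟨huA, hadj⟩))
  have h6 : ∀ w ∈ A.filter (G.Adj v),
      (A.filter (G.Adj w)).card ≤ (A'.filter (G.Adj w)).card + 1 := by
    intro w hw
    obtain ⟨hwA, hvw⟩ := Finset.mem_filter.1 hw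
    have hsub : A.filter (G.Adj w) ⊆ insert v (A'.filter (G.Adj w)) := by
      intro u hu
      obtain ⟨huA, hwu⟩ := Finset.mem_filter.1 hu
      by_cases huv : u = v
      · exact huv ▸ Finset.mem_insert_self _ _
      · apply Finset.mem_insert_of_mem
        apply Finset.mem_filter.2
        refine ⟨Finset.mem_sdiff.2 ⟨huA, ?_⟩, hwu⟩
        intro huB
        rcases Finset.mem_insert.1 huB with h | h
        · exact huv h
        · exact htf v w u hvw (Finset.mem_filter.1 h).2 hwu
    calc (A.filter (G.Adj w)).card ≤ (insert v (A'.filter (G.Adj w))).card :=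
          Finset.card_le_card hsub
      _ ≤ (A'.filter (G.Adj w)).card + 1 := Finset.card_insert_le _ _
  have h6' : ∑ w ∈ A.filter (G.Adj v), (A.filter (G.Adj w)).card
      ≤ (∑ w ∈ A.filter (G.Adj v), (A'.filter (G.Adj w)).card) + (A.filter (G.Adj v)).card := by
    calc ∑ w ∈ A.filter (G.Adj v), (A.filter (G.Adj w)).card
        ≤ ∑ w ∈ A.filter (G.Adj v), ((A'.filter (G.Adj w)).card + 1) :=
          Finset.sum_le_sum h6
      _ = _ := by rw [Finset.sum_add_distrib, Finset.sum_const, smul_eq_mul, mul_one]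
  omega


set_option maxHeartbeats 1600000 in
lemma shearer_main (htf : ∀ a b c : V, G.Adj a b → G.Adj a c → G.Adj b c → False)
    (A : Finset V) :
    ∃ S ⊆ A, (∀ a ∈ S, ∀ b ∈ S, ¬ G.Adj a b) ∧
      (A.card : ℝ) * gg ((∑ u ∈ A, ((A.filter (G.Adj u)).card : ℝ)) / A.card) ≤ S.card := by
  induction A using Finset.strongInductionOn with
  | _ A ih =>
  rcases A.eq_empty_or_nonempty with rfl | hne
  · exact ⟨∅, Finset.Subset.refl _, by simp, by simp⟩
  -- notation
  set n : ℕ := A.card with hn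
  have hnpos : 0 < n := Finset.card_pos.2 hne
  set t : ℕ := ∑ u ∈ A, (A.filter (G.Adj u)).card with ht
  have hcast : (∑ u ∈ A, ((A.filter (G.Adj u)).card : ℝ)) = (t : ℝ) := by
    rw [ht]; push_cast; ring
  set d : ℝ := (t : ℝ) / n with hd
  have hd0 : 0 ≤ d := by rw [hd]; exact div_nonneg (Nat.cast_nonneg _) (Nat.cast_nonneg _)
  have hg1 : gg' d ≤ 0 := gg'_nonpos hd0
  have hnd : (n : ℝ) * d = t := by
    rw [hd]; field_simp
  -- the bound function
  set Dv : V → ℕ := fun v => ∑ u ∈ A.filter (G.Adj v), (A.filter (G.Adj u)).card with hDv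
  set nv : V → ℕ := fun v => (A \ insert v (A.filter (G.Adj v))).card with hnv
  set b : V → ℝ := fun v =>
    1 + (nv v : ℝ) * gg d + ((t : ℝ) - 2 * (Dv v : ℝ) - (nv v : ℝ) * d) * gg' d with hb
  -- averaging facts
  have hBsub : ∀ v ∈ A, insert v (A.filter (G.Adj v)) ⊆ A := by
    intro v hv u hu
    rcases Finset.mem_insert.1 hu with h | h
    · exact h ▸ hv
    · exact (Finset.mem_filter.1 h).1
  have hBcard : ∀ v ∈ A, (insert v (A.filter (G.Adj v))).card = (A.filter (G.Adj v)).card + 1 := by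
    intro v hv
    rw [Finset.card_insert_of_notMem (fun h => G.irrefl (Finset.mem_filter.1 h).2)]
  have hnv_eq : ∀ v ∈ A, (nv v : ℝ) = (n : ℝ) - 1 - ((A.filter (G.Adj v)).card : ℝ) := by
    intro v hv
    have h1 : nv v = n - ((A.filter (G.Adj v)).card + 1) := by
      rw [hnv]; dsimp only
      rw [Finset.card_sdiff_of_subset (hBsub v hv), hBcard v hv]
    have h2 : (A.filter (G.Adj v)).card + 1 ≤ n := by
      rw [← hBcard v hv]; exact Finset.card_le_card (hBsub v hv)
    rw [h1, Nat.cast_sub h2]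
    push_cast; ring
  have hsum_nv : ∑ v ∈ A, (nv v : ℝ) = (n : ℝ)^2 - n - t := by
    rw [Finset.sum_congr rfl hnv_eq, Finset.sum_sub_distrib, Finset.sum_sub_distrib, hcast,
      Finset.sum_const, Finset.sum_const, nsmul_eq_mul, nsmul_eq_mul, ← hn]
    ring
  have hsum_Dv : ∑ v ∈ A, (Dv v : ℝ) = ∑ u ∈ A, ((A.filter (G.Adj u)).card : ℝ)^2 := by
    have e1 : ∑ v ∈ A, Dv v = ∑ u ∈ A, (A.filter (G.Adj u)).card * (A.filter (G.Adj u)).card := by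
      rw [hDv]
      dsimp only
      have e2 : ∀ v ∈ A, ∑ u ∈ A.filter (G.Adj v), (A.filter (G.Adj u)).card
          = ∑ u ∈ A, if G.Adj v u then (A.filter (G.Adj u)).card else 0 :=
        fun v _ => Finset.sum_filter _ _
      rw [Finset.sum_congr rfl e2, Finset.sum_comm]
      refine Finset.sum_congr rfl fun u hu => ?_
      have e3 : ∑ v ∈ A, (if G.Adj v u then (A.filter (G.Adj u)).card else 0)
          = ∑ v ∈ A.filter (fun v => G.Adj v u), (A.filter (G.Adj u)).card :=
        (Finset.sum_filter _ _).symm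
      have e4 : A.filter (fun v => G.Adj v u) = A.filter (G.Adj u) :=
        Finset.filter_congr (fun v _ => G.adj_comm v u)
      rw [e3, e4, Finset.sum_const, smul_eq_mul]
    calc ∑ v ∈ A, (Dv v : ℝ) = ((∑ v ∈ A, Dv v : ℕ) : ℝ) := by push_cast; ring
    _ = _ := by rw [e1]; push_cast; ring
  have hCS : (t : ℝ)^2 ≤ (n : ℝ) * ∑ u ∈ A, ((A.filter (G.Adj u)).card : ℝ)^2 := by
    have := Finset.sum_mul_sq_le_sq_mul_sq A (fun _ => (1:ℝ))
      (fun u => ((A.filter (G.Adj u)).card : ℝ))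
    simp only [one_pow, one_mul, Finset.sum_const, nsmul_eq_mul, mul_one] at this
    rw [← hcast]
    exact this
  -- average bound
  have havg : (n : ℝ) * ((n : ℝ) * gg d) ≤ ∑ v ∈ A, b v := by
    have hbsum : ∑ v ∈ A, b v
        = (∑ _v ∈ A, (1:ℝ)) + (∑ v ∈ A, (nv v : ℝ)) * gg d
          + (∑ v ∈ A, ((t : ℝ) - 2 * (Dv v : ℝ) - (nv v : ℝ) * d)) * gg' d := by
      rw [hb]
      dsimp only
      rw [Finset.sum_add_distrib, Finset.sum_add_distrib, ← Finset.sum_mul, ← Finset.sum_mul]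
    have hs1 : (∑ _v ∈ A, (1:ℝ)) = (n:ℝ) := by
      rw [Finset.sum_const, nsmul_eq_mul, mul_one, ← hn]
    have hs3 : ∑ v ∈ A, ((t : ℝ) - 2 * (Dv v : ℝ) - (nv v : ℝ) * d)
        = (n:ℝ) * t - 2 * (∑ v ∈ A, (Dv v : ℝ)) - ((n : ℝ)^2 - n - t) * d := by
      rw [Finset.sum_sub_distrib, Finset.sum_sub_distrib, Finset.sum_const, nsmul_eq_mul, ← hn,
        ← Finset.mul_sum, ← Finset.sum_mul, hsum_nv]
    rw [hbsum, hs1, hsum_nv, hs3, hsum_Dv]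
    have hphi := gg_phi hd0
    have hQ : (n:ℝ) * t - 2 * (∑ u ∈ A, ((A.filter (G.Adj u)).card : ℝ)^2)
        - ((n : ℝ)^2 - n - t) * d ≤ (n : ℝ) * (d - d^2) := by
      have : (n : ℝ) * t - 2 * ((t:ℝ)^2 / n) - ((n : ℝ)^2 - n - t) * d = (n:ℝ) * (d - d^2) := by
        rw [hd]; field_simp; ring
      rw [← this]
      have h2 : (t:ℝ)^2 / n ≤ ∑ u ∈ A, ((A.filter (G.Adj u)).card : ℝ)^2 := by
        rw [div_le_iff₀ (show (0:ℝ) < n by exact_mod_cast hnpos)]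
        calc (t:ℝ)^2 ≤ (n : ℝ) * ∑ u ∈ A, ((A.filter (G.Adj u)).card : ℝ)^2 := hCS
        _ = _ := by ring
      linarith
    have step : ((n : ℝ) * t - 2 * (∑ u ∈ A, ((A.filter (G.Adj u)).card : ℝ)^2)
        - ((n : ℝ)^2 - n - t) * d) * gg' d ≥ ((n : ℝ) * (d - d^2)) * gg' d :=
      mul_le_mul_of_nonpos_right hQ hg1
    have hfinal : (n : ℝ) + ((n : ℝ)^2 - n - t) * gg d + ((n : ℝ) * (d - d^2)) * gg' d
        = (n : ℝ) * ((n : ℝ) * gg d)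
          + (n : ℝ) * (1 - (1+d) * gg d + (d - d^2) * gg' d) := by
      have : ((n:ℝ)^2 - n - t) = (n:ℝ)^2 - n * (1 + d) := by rw [← hnd]; ring
      rw [this]; ring
    nlinarith [mul_nonneg (Nat.cast_nonneg (α := ℝ) n) hphi, step, hfinal]
  -- pick a good vertex
  obtain ⟨v, hv, hvb⟩ := Finset.exists_le_of_sum_le hne
    (show ∑ _v ∈ A, (n : ℝ) * gg d ≤ ∑ v ∈ A, b v by
      rw [Finset.sum_const, nsmul_eq_mul, ← hn]
      exact havg)
  -- apply induction hypothesis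
  set B := insert v (A.filter (G.Adj v)) with hBdef
  set A' := A \ B with hA'def
  have hA'ss : A' ⊂ A := by
    apply Finset.sdiff_ssubset (hBsub v hv)
    exact ⟨v, Finset.mem_insert_self _ _⟩
  obtain ⟨S', hS'A', hindep', hcard'⟩ := ih A' hA'ss
  set t' : ℕ := ∑ u ∈ A', (A'.filter (G.Adj u)).card with ht'
  have hcast' : (∑ u ∈ A', ((A'.filter (G.Adj u)).card : ℝ)) = (t' : ℝ) := by
    rw [ht']; push_cast; ring
  rw [hcast'] at hcard'
  have hdrop : (t' : ℝ) + 2 * (Dv v : ℝ) ≤ (t : ℝ) := by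
    have h := edge_drop G htf A v hv
    have h2 : t' + 2 * Dv v ≤ t := by
      rw [ht', hDv, ht, hA'def, hBdef]
      exact h
    exact_mod_cast h2
  have hnveq : nv v = A'.card := by rw [hnv]
  -- key tangent estimate
  have hkey : (nv v : ℝ) * gg d + ((t : ℝ) - 2 * (Dv v : ℝ) - (nv v : ℝ) * d) * gg' d
      ≤ (A'.card : ℝ) * gg ((t' : ℝ) / A'.card) := by
    by_cases hz : A'.card = 0
    · have hA'e : A' = ∅ := Finset.card_eq_zero.1 hz
      have ht'0 : t' = 0 := by rw [ht', hA'e]; simp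
      rw [hnveq, hz, ht'0]
      simp only [Nat.cast_zero, zero_mul, zero_add, Nat.cast_ofNat, CharP.cast_eq_zero]
      have : (0:ℝ) ≤ (t : ℝ) - 2 * (Dv v : ℝ) - 0 * d := by
        rw [ht'0] at hdrop; push_cast at hdrop; linarith
      nlinarith
    · have hA'pos : (0:ℝ) < A'.card := by exact_mod_cast Nat.pos_of_ne_zero hz
      set x : ℝ := (t' : ℝ) / A'.card with hx
      have hx0 : 0 ≤ x := by rw [hx]; exact div_nonneg (Nat.cast_nonneg _) (Nat.cast_nonneg _)
      have htan := gg_tangent hd0 hx0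
      have hmul := mul_le_mul_of_nonneg_left htan (le_of_lt hA'pos)
      have hxe : (A'.card : ℝ) * (x - d) = (t' : ℝ) - A'.card * d := by
        rw [hx]; field_simp
      rw [hnveq]
      have e1 : (A'.card : ℝ) * (gg d + (x - d) * gg' d)
          = (A'.card : ℝ) * gg d + ((t' : ℝ) - A'.card * d) * gg' d := by
        rw [mul_add, ← mul_assoc, hxe]
      rw [e1] at hmul
      have e2 : ((t : ℝ) - 2 * (Dv v : ℝ) - (A'.card : ℝ) * d) * gg' d
          ≤ ((t' : ℝ) - A'.card * d) * gg' d := by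
        apply mul_le_mul_of_nonpos_right _ hg1
        linarith
      linarith
  -- assemble the independent set
  have hvA' : v ∉ A' := by
    rw [hA'def]
    simp [Finset.mem_sdiff, hBdef]
  have hvS' : v ∉ S' := fun h => hvA' (hS'A' h)
  refine ⟨insert v S', ?_, ?_, ?_⟩
  · apply Finset.insert_subset hv (hS'A'.trans ?_)
    rw [hA'def]; exact Finset.sdiff_subset
  · intro a ha c hc
    rcases Finset.mem_insert.1 ha with rfl | ha' <;> rcases Finset.mem_insert.1 hc with rfl | hc'
    · exact G.irrefl
    · -- a = v, c ∈ S'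
      intro hadj
      have hcA' : c ∈ A' := hS'A' hc'
      rw [hA'def, Finset.mem_sdiff] at hcA'
      exact hcA'.2 (Finset.mem_insert_of_mem (Finset.mem_filter.2 ⟨hcA'.1, hadj⟩))
    · intro hadj
      have haA' : a ∈ A' := hS'A' ha'
      rw [hA'def, Finset.mem_sdiff] at haA'
      exact haA'.2 (Finset.mem_insert_of_mem (Finset.mem_filter.2 ⟨haA'.1, hadj.symm⟩))
    · exact hindep' a ha' c hc'
  · rw [hcast, ← hd]
    have hcard_ins : (insert v S').card = S'.card + 1 := Finset.card_insert_of_notMem hvS'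
    rw [hcard_ins]
    have : (n : ℝ) * gg d ≤ b v := hvb
    rw [hb] at this
    push_cast
    dsimp only at this
    linarith [hkey, hcard']


end comb

set_option maxHeartbeats 1600000 in
/-- Shearer: for all large `k`, every graph on at least `2k²/log k`
vertices contains a triangle or an independent set of size `k`. -/
theorem stmt_17 :
    ∃ k₀ : ℕ, ∀ k ≥ k₀, ∀ n : ℕ,
      2 * (k : ℝ) ^ 2 / Real.log k ≤ (n : ℝ) →
      ∀ G : SimpleGraph (Fin n),
        (¬ G.CliqueFree 3) ∨
        (∃ S : Finset (Fin n), S.card = k ∧ ∀ a ∈ S, ∀ b ∈ S, ¬ G.Adj a b) := by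
  use 1000000
  intro k hk n hn G
  by_cases hcf : G.CliqueFree 3
  · right
    classical
    have htf : ∀ a b c : Fin n, G.Adj a b → G.Adj a c → G.Adj b c → False := by
      intro a b c hab hac hbc
      exact hcf {a,b,c} (SimpleGraph.is3Clique_triple_iff.mpr ⟨hab, hac, hbc⟩)
    have hK1 : (1000000:ℝ) ≤ (k:ℝ) := by exact_mod_cast hk
    have hlk : 0 < Real.log k := Real.log_pos (by linarith)
    by_cases hdeg : ∃ v : Fin n, k ≤ (Finset.univ.filter (G.Adj v)).card
    · obtain ⟨v, hv⟩ := hdeg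
      obtain ⟨T, hT, hTcard⟩ := Finset.exists_subset_card_eq hv
      refine ⟨T, hTcard, ?_⟩
      intro a ha b hb hadj
      exact htf v a b (Finset.mem_filter.1 (hT ha)).2 (Finset.mem_filter.1 (hT hb)).2 hadj
    · push_neg at hdeg
      obtain ⟨S, _, hindep, hScard⟩ := shearer_main G htf Finset.univ
      have hcu : (Finset.univ : Finset (Fin n)).card = n := by simp
      rw [hcu] at hScard
      have hnpos : (0:ℝ) < (n:ℝ) := by
        have h1 : (0:ℝ) < 2 * (k : ℝ) ^ 2 / Real.log k := by positivity
        linarith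
      set d : ℝ := (∑ u ∈ (Finset.univ : Finset (Fin n)),
        (((Finset.univ : Finset (Fin n)).filter (G.Adj u)).card : ℝ)) / n with hd
      have hd0 : 0 ≤ d := by
        rw [hd]
        exact div_nonneg (Finset.sum_nonneg fun u _ => Nat.cast_nonneg _) (Nat.cast_nonneg _)
      have hterm : ∀ u : Fin n,
          (((Finset.univ : Finset (Fin n)).filter (G.Adj u)).card : ℝ) ≤ (k:ℝ) - 1 := by
        intro u
        have h1 := hdeg u
        have h2 : ((Finset.univ : Finset (Fin n)).filter (G.Adj u)).card + 1 ≤ k := h1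
        have := (Nat.cast_le (α := ℝ)).2 h2
        push_cast at this
        linarith
      have hdle : d ≤ (k:ℝ) - 1 := by
        rw [hd, div_le_iff₀ hnpos]
        calc (∑ u ∈ (Finset.univ : Finset (Fin n)),
            (((Finset.univ : Finset (Fin n)).filter (G.Adj u)).card : ℝ))
            ≤ ∑ _u ∈ (Finset.univ : Finset (Fin n)), ((k:ℝ) - 1) :=
              Finset.sum_le_sum (fun u _ => hterm u)
          _ = ((k:ℝ) - 1) * n := by
              rw [Finset.sum_const, nsmul_eq_mul, hcu]; ring
      have hkS : (k : ℝ) ≤ (S.card : ℝ) := by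
        calc (k:ℝ) ≤ (2 * (k : ℝ)^2 / Real.log k) * gg ((k:ℝ) - 1) := gfinal hk
          _ ≤ (n:ℝ) * gg ((k:ℝ) - 1) :=
              mul_le_mul_of_nonneg_right hn (gg_nonneg (by linarith))
          _ ≤ (n:ℝ) * gg d :=
              mul_le_mul_of_nonneg_left (gg_anti hd0 hdle) (le_of_lt hnpos)
          _ ≤ (S.card : ℝ) := hScard
      have hkS' : k ≤ S.card := by exact_mod_cast hkS
      obtain ⟨T, hTS, hTcard⟩ := Finset.exists_subset_card_eq hkS'
      exact ⟨T, hTcard, fun a ha b hb => hindep a (hTS ha) b (hTS hb)⟩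
  · exact Or.inl hcf
end
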